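/- arXiv:1111.6910 — 2 statements merged into one kernel-verified Lean document; each statement's English description precedes it below -/
import Mathlib

section
/- Let A and B be symmetric 2×2 real matrices that commute. Then there exist real numbers a, b, not both zero, such that a·A + b·B is a scalar multiple of the identity matrix. -/
theorem stmt_1 (A B : Matrix (Fin 2) (Fin 2) ℝ)
    (hA : A.transpose = A) (hB : B.transpose = B) (hcomm : A * B = B * A) :
    ∃ a b : ℝ, ¬(a = 0 ∧ b = 0) ∧
      ∃ c : ℝ, a • A + b • B = c • (1 : Matrix (Fin 2) (Fin 2) ℝ) := by
  have hA' : A 1 0 = A 0 1 := by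
    conv_lhs => rw [← hA]
    rfl
  have hB' : B 1 0 = B 0 1 := by
    conv_lhs => rw [← hB]
    rfl
  have hc : A 0 0 * B 0 1 + A 0 1 * B 1 1 = B 0 0 * A 0 1 + B 0 1 * A 1 1 := by
    have := congrFun (congrFun hcomm 0) 1
    simpa [Matrix.mul_apply, Fin.sum_univ_two, hA', hB'] using this
  by_cases h1 : A 0 0 - A 1 1 = 0 ∧ B 0 0 - B 1 1 = 0
  · obtain ⟨ha1, hb1⟩ := h1
    by_cases h2 : A 0 1 = 0 ∧ B 0 1 = 0
    · refine ⟨1, 0, by simp, A 0 0, ?_⟩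
      ext i j
      fin_cases i <;> fin_cases j <;>
        simp [Matrix.one_apply, hA', hB', h2.1, h2.2] <;> linarith
    · refine ⟨B 0 1, -(A 0 1), ?_, B 0 1 * A 0 0 - A 0 1 * B 0 0, ?_⟩
      · rintro ⟨hb, ha⟩
        exact h2 ⟨by linarith [neg_eq_zero.mp ha], hb⟩
      · ext i j
        fin_cases i <;> fin_cases j <;>
          simp [Matrix.one_apply, hA', hB'] <;> ring_nf <;> nlinarith [hc]
  · refine ⟨B 0 0 - B 1 1, -(A 0 0 - A 1 1), ?_, (B 0 0 - B 1 1) * A 0 0 - (A 0 0 - A 1 1) * B 0 0, ?_⟩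
    · rintro ⟨hb, ha⟩
      exact h1 ⟨by linarith [neg_eq_zero.mp ha], hb⟩
    · ext i j
      fin_cases i <;> fin_cases j <;>
        simp [Matrix.one_apply, hA', hB'] <;> ring_nf <;> nlinarith [hc]
end

section
/- Let A and B be symmetric 2×2 real matrices such that A*B + B*A = c·𝟙 for some real c, and suppose tr A ≠ 0 or tr B ≠ 0. Then A*B = B*A. -/
theorem stmt_8 (A B : Matrix (Fin 2) (Fin 2) ℝ)
    (hA : A.transpose = A) (hB : B.transpose = B)
    (c : ℝ) (h : A * B + B * A = c • (1 : Matrix (Fin 2) (Fin 2) ℝ))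
    (htr : Matrix.trace A ≠ 0 ∨ Matrix.trace B ≠ 0) :
    A * B = B * A := by
  have hA' : A 1 0 = A 0 1 := by
    have := congrFun (congrFun hA 0) 1
    simpa [Matrix.transpose_apply] using this
  have hB' : B 1 0 = B 0 1 := by
    have := congrFun (congrFun hB 0) 1
    simpa [Matrix.transpose_apply] using this
  have h00 := congrFun (congrFun h 0) 0
  have h01 := congrFun (congrFun h 0) 1
  have h11 := congrFun (congrFun h 1) 1
  simp [Matrix.mul_apply, Fin.sum_univ_two, Matrix.one_apply, Matrix.smul_apply,
    hA', hB'] at h00 h01 h11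
  have key : A 0 0 * B 0 1 + A 0 1 * B 1 1 - (B 0 0 * A 0 1 + B 0 1 * A 1 1) = 0 := by
    rcases htr with ht | ht
    · have ht' : A 0 0 + A 1 1 ≠ 0 := by
        simpa [Matrix.trace, Matrix.diag, Fin.sum_univ_two] using ht
      have : (A 0 0 + A 1 1) *
          (A 0 0 * B 0 1 + A 0 1 * B 1 1 - (B 0 0 * A 0 1 + B 0 1 * A 1 1)) = 0 := by
        linear_combination (A 0 0 - A 1 1) * h01 - A 0 1 * (h00 - h11)
      rcases mul_eq_zero.mp this with h' | h'
      · exact absurd h' ht'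
      · exact h'
    · have ht' : B 0 0 + B 1 1 ≠ 0 := by
        simpa [Matrix.trace, Matrix.diag, Fin.sum_univ_two] using ht
      have : (B 0 0 + B 1 1) *
          (A 0 0 * B 0 1 + A 0 1 * B 1 1 - (B 0 0 * A 0 1 + B 0 1 * A 1 1)) = 0 := by
        linear_combination (B 1 1 - B 0 0) * h01 + B 0 1 * (h00 - h11)
      rcases mul_eq_zero.mp this with h' | h'
      · exact absurd h' ht'
      · exact h'
  ext i j
  fin_cases i <;> fin_cases j <;>
    simp [Matrix.mul_apply, Fin.sum_univ_two, hA', hB'] <;> linarith [key, h00, h01, h11]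
end
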